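/- arXiv:1310.4953 — 2 statements merged into one kernel-verified Lean document; each statement's English description precedes it below -/
import Mathlib

section
/- In the policy iteration algorithm, if σ_{k'} = σ_k for some k' > k (and the stopping condition was not triggered before), then v^k = f(v^k), i.e. v^k is the fixed point of f; consequently the sequence of policies never visits the same policy twice before termination, and the algorithm terminates after at most |A| iterations. -/
/-!
A monotone contraction `g` with `g x ≤ x` has decreasing iterates from `x`, and they converge to
the fixed point of `g`, which therefore lies below `x`. Applied to `g = F (σ (k+1))` and
`x = V k`, this makes the values `V k` decrease. If a policy repeats, `σ k' = σ k` with `k < k'`,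
uniqueness of fixed points gives `V k' = V k`, so `V` is constant on `[k, k']`; in particular
`f (V k) = V (k+1) = V k`. The conservative rule then stops the algorithm at the first repetition,
and by pigeonhole some policy repeats among `σ 0, …, σ |A|`.
-/

open Filter Function Topology
open scoped NNReal

theorem ContractingWith.tendsto_iterate_of_isFixedPt {X : Type*} [MetricSpace X] {K : ℝ≥0}
    {g : X → X} (hg : ContractingWith K g) {w : X} (hw : IsFixedPt g w) (x : X) :
    Tendsto (fun m => g^[m] x) atTop (𝓝 w) := by
  rw [tendsto_iff_dist_tendsto_zero]
  refine squeeze_zero (fun _ => dist_nonneg) (fun m => ?_)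
    (by simpa using (tendsto_pow_atTop_nhds_zero_of_lt_one K.coe_nonneg hg.1).mul_const (dist x w))
  calc dist (g^[m] x) w = dist (g^[m] x) (g^[m] w) := by rw [(hw.iterate m).eq]
    _ ≤ (K : ℝ) ^ m * dist x w := by
      simpa using (hg.toLipschitzWith.iterate m).dist_le_mul x w

theorem ContractingWith.le_of_map_le {X : Type*} [MetricSpace X] [Preorder X]
    [ClosedIicTopology X] {K : ℝ≥0} {g : X → X} (hg : ContractingWith K g) (hmono : Monotone g)
    {w x : X} (hw : IsFixedPt g w) (hx : g x ≤ x) : w ≤ x :=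
  le_of_tendsto' (hg.tendsto_iterate_of_isFixedPt hw x)
    fun m => hmono.antitone_iterate_of_map_le hx (Nat.zero_le m)

theorem contractingWith_of_norm_sub_le {E : Type*} [NormedAddCommGroup E] {g : E → E}
    {lam : ℝ} (hlam0 : 0 ≤ lam) (hlam1 : lam < 1) (h : ∀ v w, ‖g v - g w‖ ≤ lam * ‖v - w‖) :
    ContractingWith ⟨lam, hlam0⟩ g :=
  ⟨hlam1, LipschitzWith.of_dist_le_mul fun v w => by rw [dist_eq_norm, dist_eq_norm]; exact h v w⟩

structure IsPolicyIteration {A X : Type*} [Preorder X] (F : A → X → X) (f : X → X)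
    (σ : ℕ → A) (V : ℕ → X) : Prop where
  map_le : ∀ v a, f v ≤ F a v
  isFixedPt : ∀ k, IsFixedPt (F (σ k)) (V k)
  improve : ∀ k, f (V k) = F (σ (k + 1)) (V k)

namespace IsPolicyIteration

variable {A X : Type*} [MetricSpace X] [PartialOrder X] [ClosedIicTopology X] {K : ℝ≥0}
  {F : A → X → X} {f : X → X} {σ : ℕ → A} {V : ℕ → X}

theorem antitone_value (hPI : IsPolicyIteration F f σ V) (hmono : ∀ a, Monotone (F a))
    (hcontr : ∀ a, ContractingWith K (F a)) : Antitone V := by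
  refine antitone_nat_of_succ_le fun k => (hcontr _).le_of_map_le (hmono _) (hPI.isFixedPt _) ?_
  calc F (σ (k + 1)) (V k) = f (V k) := (hPI.improve k).symm
    _ ≤ F (σ k) (V k) := hPI.map_le _ _
    _ = V k := hPI.isFixedPt k

theorem map_value_eq_of_policy_eq (hPI : IsPolicyIteration F f σ V) (hmono : ∀ a, Monotone (F a))
    (hcontr : ∀ a, ContractingWith K (F a)) {k k' : ℕ} (hkk' : k < k') (hσ : σ k' = σ k) :
    f (V k) = V k := by
  have hV : V k' = V k :=
    (hcontr (σ k)).fixedPoint_unique' (hσ ▸ hPI.isFixedPt k') (hPI.isFixedPt k)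
  -- `V` is antitone, so it is constant on `[k, k']`
  have hsucc : V (k + 1) = V k := le_antisymm (hPI.antitone_value hmono hcontr k.le_succ)
    (hV ▸ hPI.antitone_value hmono hcontr hkk')
  calc f (V k) = F (σ (k + 1)) (V (k + 1)) := by rw [hPI.improve, hsucc]
    _ = V k := (hPI.isFixedPt (k + 1)).eq.trans hsucc

theorem exists_policy_succ_eq_lt_card [Fintype A] (hPI : IsPolicyIteration F f σ V)
    (hmono : ∀ a, Monotone (F a)) (hcontr : ∀ a, ContractingWith K (F a))
    (hcons : ∀ k, f (V k) = F (σ k) (V k) → σ (k + 1) = σ k) :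
    ∃ k < Fintype.card A, σ (k + 1) = σ k := by
  obtain ⟨i, j, hij, hσ⟩ := Fintype.exists_ne_map_eq_of_card_lt
    (fun i : Fin (Fintype.card A + 1) => σ i) (by simp)
  wlog hlt : (i : ℕ) < j generalizing i j
  · exact this j i hij.symm hσ.symm (lt_of_le_of_ne (not_lt.1 hlt) (Fin.val_ne_of_ne hij.symm))
  refine ⟨i, hlt.trans_le (Nat.lt_succ_iff.1 j.isLt), hcons i ?_⟩
  rw [hPI.map_value_eq_of_policy_eq hmono hcontr hlt hσ.symm, hPI.isFixedPt i]

end IsPolicyIteration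

theorem policy_iteration_no_repeat_and_termination_general {n : ℕ} {A : Type*}
    [Fintype A]
    (lam : ℝ) (hlam0 : 0 ≤ lam) (hlam1 : lam < 1)
    (F : A → (Fin n → ℝ) → (Fin n → ℝ))
    (hmono : ∀ σ, Monotone (F σ))
    (hcontr : ∀ σ v w, ‖F σ v - F σ w‖ ≤ lam * ‖v - w‖)
    (f : (Fin n → ℝ) → (Fin n → ℝ))
    (hle : ∀ v σ, f v ≤ F σ v)
    (σ : ℕ → A) (V : ℕ → Fin n → ℝ)
    (hfix : ∀ k, F (σ k) (V k) = V k)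
    (himp : ∀ k, f (V k) = F (σ (k+1)) (V k))
    (hcons : ∀ k, f (V k) = F (σ k) (V k) → σ (k+1) = σ k) :
    (∀ k k', k < k' → σ k' = σ k → f (V k) = V k) ∧
    ∃ k < Fintype.card A, σ (k+1) = σ k := by
  have hPI : IsPolicyIteration F f σ V := ⟨hle, hfix, himp⟩
  have hcontr' : ∀ a, ContractingWith ⟨lam, hlam0⟩ (F a) := fun a =>
    contractingWith_of_norm_sub_le hlam0 hlam1 (hcontr a)
  exact ⟨fun _ _ hkk' hσ => hPI.map_value_eq_of_policy_eq hmono hcontr' hkk' hσ,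
    hPI.exists_policy_succ_eq_lt_card hmono hcontr' hcons⟩

/-- In the policy iteration algorithm, a repeated policy means the
current value is already the fixed point of `f`; consequently (with the
conservative improvement rule) the algorithm triggers its stopping condition
within at most `|A|` iterations. -/
theorem policy_iteration_no_repeat_and_termination {n : ℕ} {A : Type*}
    [Fintype A] [Nonempty A]
    (lam : ℝ) (hlam0 : 0 ≤ lam) (hlam1 : lam < 1)
    (F : A → (Fin n → ℝ) → (Fin n → ℝ))
    (hmono : ∀ σ, Monotone (F σ))
    (hcontr : ∀ σ v w, ‖F σ v - F σ w‖ ≤ lam * ‖v - w‖)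
    (f : (Fin n → ℝ) → (Fin n → ℝ))
    (hle : ∀ v σ, f v ≤ F σ v)
    (hatt : ∀ v, ∃ σ, f v = F σ v)
    (σ : ℕ → A) (V : ℕ → Fin n → ℝ)
    (hfix : ∀ k, F (σ k) (V k) = V k)
    (himp : ∀ k, f (V k) = F (σ (k+1)) (V k))
    (hcons : ∀ k, f (V k) = F (σ k) (V k) → σ (k+1) = σ k) :
    (∀ k k', k < k' → σ k' = σ k → f (V k) = V k) ∧
    ∃ k < Fintype.card A, σ (k+1) = σ k :=
  policy_iteration_no_repeat_and_termination_general lam hlam0 hlam1 F hmono hcontr f hle σ V hfix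
    himp hcons
end

section
/- For the mean-payoff policy iteration under the renewal-state assumption, the algorithm terminates after at most (m₁ − n)·(1 + ⌊log K / log(K/(K−1))⌋) iterations, where K = max_i T_{ic} is the maximal (over states and policy pairs) expected first return time to the renewal state c. -/
/-!
Let `T = T_{·c}` be the return times of the pair of policies maximising `∑ i, T_{ic}`. Switching a
single action cannot increase them, so every transition satisfies
`∑_{j ≠ c} P i a b j * T j ≤ T i - 1`. Consequently, in the coordinates `w = η • T + v`
(with `v c = 0`) each one-step operator maps a shift by `t • T` to a shift by at most
`t • (T - 1) ≤ ((K - 1) / K) • t • T`, and Hoffman–Karp iteration becomes policy iteration for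
contracting operators. There the values `w k` decrease to the final value `w*`, and their weighted
gap to `w*` decays geometrically. If the gap at step `k` is attained at state `i`, the action
`σ k i` is worse than optimal for `w*` by at least that gap, so once the gap has shrunk by the
factor `1 / K`, that is after `1 + ⌊log K / log (K / (K - 1))⌋` steps, it is never chosen again.
Each of the `m₁ - n` non-final actions is thus the gap-realising action during at most that many
steps.
-/

def colZero {n : ℕ} (M : Matrix (Fin n) (Fin n) ℝ) (c : Fin n) :
    Matrix (Fin n) (Fin n) ℝ :=
  Matrix.of fun i j => if j = c then 0 else M i j

/-- The expected first return/hitting time (at times `≥ 1`) to state `c`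
starting from `i`, for the Markov chain with transition matrix `M`:
`T_{ic}(M) = Σ_{k≥0} P(τ_c > k | X_0 = i) = Σ_{k≥0} ((M_(c))^k 1)_i`. -/
noncomputable def expReturnTime {n : ℕ} (M : Matrix (Fin n) (Fin n) ℝ)
    (c i : Fin n) : ℝ :=
  ∑' k : ℕ, ((colZero M c) ^ k).mulVec (fun _ => 1) i

open Filter Topology Finset Matrix

namespace Matrix

variable {ι : Type*} [Fintype ι] {N : Matrix ι ι ℝ}

theorem mulVec_mono_of_nonneg (hN : ∀ i j, 0 ≤ N i j) : Monotone (N *ᵥ ·) :=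
  fun _ _ hxy i => sum_le_sum fun j _ => mul_le_mul_of_nonneg_left (hxy j) (hN i j)

variable [DecidableEq ι]

theorem tendsto_pow_mulVec_zero (hN : ∀ i j, 0 ≤ N i j)
    (hsum : ∀ i, Summable fun k : ℕ => (N ^ k *ᵥ 1) i) (z : ι → ℝ) (i : ι) :
    Tendsto (fun m : ℕ => (N ^ m *ᵥ z) i) atTop (𝓝 0) := by
  have hbound : ∀ m, |(N ^ m *ᵥ z) i| ≤ ‖z‖ * (N ^ m *ᵥ 1) i := fun m =>
    calc |(N ^ m *ᵥ z) i| ≤ ∑ j, (N ^ m) i j * ‖z‖ := by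
          refine (abs_sum_le_sum_abs _ _).trans (sum_le_sum fun j _ => ?_)
          rw [abs_mul, abs_of_nonneg (pow_apply_nonneg hN m i j)]
          exact mul_le_mul_of_nonneg_left (norm_le_pi_norm z j) (pow_apply_nonneg hN m i j)
      _ = ‖z‖ * (N ^ m *ᵥ 1) i := by simp [mulVec, dotProduct, sum_mul, mul_comm]
  refine squeeze_zero_norm hbound ?_
  simpa using (hsum i).tendsto_atTop_zero.const_mul ‖z‖

theorem nonneg_of_mulVec_le (hN : ∀ i j, 0 ≤ N i j)
    (hsum : ∀ i, Summable fun k : ℕ => (N ^ k *ᵥ 1) i) {z : ι → ℝ} (hz : N *ᵥ z ≤ z) :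
    0 ≤ z := by
  have hiter : ∀ m : ℕ, N ^ m *ᵥ z ≤ z := by
    intro m
    induction m with
    | zero => simp
    | succ m ih =>
      rw [pow_succ, ← mulVec_mulVec]
      exact (mulVec_mono_of_nonneg (pow_apply_nonneg hN m) hz).trans ih
  exact fun i => le_of_tendsto' (tendsto_pow_mulVec_zero hN hsum z i)
    fun m => hiter m i

theorem tsum_pow_mulVec_one_eq_one_add
    (hsum : ∀ i, Summable fun k : ℕ => (N ^ k *ᵥ 1) i) :
    (fun i => ∑' k : ℕ, (N ^ k *ᵥ 1) i) = 1 + N *ᵥ fun i => ∑' k : ℕ, (N ^ k *ᵥ 1) i := by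
  ext i
  rw [(hsum i).tsum_eq_zero_add]
  have hshift : ∀ k : ℕ, (N ^ (k + 1) *ᵥ 1) i = ∑ j, N i j * (N ^ k *ᵥ 1) j := fun k => by
    rw [pow_succ', ← mulVec_mulVec]; rfl
  simp only [hshift, pow_zero, one_mulVec, Pi.add_apply]
  rw [Summable.tsum_finsetSum fun j _ => (hsum j).mul_left (N i j)]
  simp [mulVec, dotProduct, tsum_mul_left]

theorem le_tsum_pow_mulVec_one (hN : ∀ i j, 0 ≤ N i j)
    (hsum : ∀ i, Summable fun k : ℕ => (N ^ k *ᵥ 1) i) {φ : ι → ℝ} (hφ : φ ≤ 1 + N *ᵥ φ) :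
    φ ≤ fun i => ∑' k : ℕ, (N ^ k *ᵥ 1) i := by
  set T : ι → ℝ := fun i => ∑' k : ℕ, (N ^ k *ᵥ 1) i
  have hT : T = 1 + N *ᵥ T := tsum_pow_mulVec_one_eq_one_add hsum
  have : N *ᵥ (T - φ) ≤ T - φ := by
    rw [mulVec_sub]
    intro i
    have := hφ i
    have h := congrFun hT i
    simp only [Pi.add_apply, Pi.sub_apply] at this h ⊢
    linarith
  exact sub_nonneg.mp (nonneg_of_mulVec_le hN hsum this)

end Matrix

section ReturnTime

variable {n : ℕ}

theorem colZero_nonneg {M : Matrix (Fin n) (Fin n) ℝ} (hM : ∀ i j, 0 ≤ M i j) (c : Fin n) :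
    ∀ i j, 0 ≤ colZero M c i j := by
  intro i j
  simp only [colZero, of_apply]
  split_ifs
  exacts [le_rfl, hM i j]

theorem colZero_mulVec_apply (M : Matrix (Fin n) (Fin n) ℝ) (c : Fin n) (v : Fin n → ℝ)
    (i : Fin n) : (colZero M c *ᵥ v) i = ∑ j ∈ univ.erase c, M i j * v j := by
  simp [colZero, mulVec, dotProduct, ite_mul, sum_ite, filter_ne']

theorem expReturnTime_eq_one_add (M : Matrix (Fin n) (Fin n) ℝ) (c : Fin n)
    (hsum : ∀ i, Summable fun k : ℕ => ((colZero M c) ^ k *ᵥ 1) i) :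
    expReturnTime M c = 1 + colZero M c *ᵥ expReturnTime M c :=
  tsum_pow_mulVec_one_eq_one_add hsum

theorem one_le_expReturnTime {M : Matrix (Fin n) (Fin n) ℝ} (hM : ∀ i j, 0 ≤ M i j) (c : Fin n)
    (hsum : ∀ i, Summable fun k : ℕ => ((colZero M c) ^ k *ᵥ 1) i) : 1 ≤ expReturnTime M c := by
  refine le_tsum_pow_mulVec_one (colZero_nonneg hM c) hsum ?_
  have : colZero M c *ᵥ 0 ≤ colZero M c *ᵥ 1 :=
    mulVec_mono_of_nonneg (colZero_nonneg hM c) (zero_le_one' (Fin n → ℝ))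
  rw [mulVec_zero] at this
  exact le_add_of_nonneg_right this

variable {A B : Fin n → Type*}

def policyMatrix (P : ∀ i : Fin n, A i → B i → Fin n → ℝ) (σ : ∀ i, A i) (δ : ∀ i, B i) :
    Matrix (Fin n) (Fin n) ℝ :=
  Matrix.of fun i j => P i (σ i) (δ i) j

/-- Witnessed by a pair of policies maximising `∑ i, T_{ic}`: a violated inequality would let a
switch of one action increase every return time, and strictly so at the switched state. -/
theorem exists_expReturnTime_superharmonic [∀ i, Fintype (A i)] [∀ i, Nonempty (A i)]
    [∀ i, Fintype (B i)] [∀ i, Nonempty (B i)] {P : ∀ i : Fin n, A i → B i → Fin n → ℝ}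
    (hP0 : ∀ i a b j, 0 ≤ P i a b j) (c : Fin n)
    (hsum : ∀ σ δ i, Summable fun k : ℕ => ((colZero (policyMatrix P σ δ) c) ^ k *ᵥ 1) i) :
    ∃ σ δ, ∀ i a b, ∑ j ∈ univ.erase c, P i a b j * expReturnTime (policyMatrix P σ δ) c j ≤
      expReturnTime (policyMatrix P σ δ) c i - 1 := by
  classical
  obtain ⟨⟨σ, δ⟩, hmax⟩ := Finite.exists_max fun p : (∀ i, A i) × (∀ i, B i) =>
    ∑ i, expReturnTime (policyMatrix P p.1 p.2) c i
  refine ⟨σ, δ, fun i a b => ?_⟩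
  by_contra! hlt
  have hM0 : ∀ σ δ, ∀ i j, 0 ≤ colZero (policyMatrix P σ δ) c i j := fun σ δ =>
    colZero_nonneg (fun i j => hP0 i (σ i) (δ i) j) c
  set σ' := Function.update σ i a
  set δ' := Function.update δ i b
  set N := colZero (policyMatrix P σ δ) c
  set N' := colZero (policyMatrix P σ' δ') c
  set T := expReturnTime (policyMatrix P σ δ) c
  set T' := expReturnTime (policyMatrix P σ' δ') c
  have hrow_i : ∀ v, (N' *ᵥ v) i = ∑ j ∈ univ.erase c, P i a b j * v j := fun v => by
    simp [N', colZero_mulVec_apply, policyMatrix, σ', δ']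
  have hrow_ne : ∀ v l, l ≠ i → (N' *ᵥ v) l = (N *ᵥ v) l := fun v l hl => by
    simp [N', N, colZero_mulVec_apply, policyMatrix, σ', δ', hl]
  have hT : T = 1 + N *ᵥ T := expReturnTime_eq_one_add _ c (hsum σ δ)
  have hT' : T' = 1 + N' *ᵥ T' := expReturnTime_eq_one_add _ c (hsum σ' δ')
  have hlt_i : T i < (1 + N' *ᵥ T) i := by
    rw [Pi.add_apply, hrow_i]
    simp only [Pi.one_apply]
    linarith
  have hTT' : T ≤ T' := by
    refine le_tsum_pow_mulVec_one (hM0 σ' δ') (hsum σ' δ') fun l => ?_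
    by_cases hl : l = i
    · exact hl ▸ hlt_i.le
    · rw [Pi.add_apply, hrow_ne T l hl, ← Pi.add_apply, ← hT]
  have hTT'_i : T i < T' i := by
    calc T i < (1 + N' *ᵥ T) i := hlt_i
      _ ≤ (1 + N' *ᵥ T') i := add_le_add_right (mulVec_mono_of_nonneg (hM0 σ' δ') hTT' i) _
      _ = T' i := by rw [← hT']
  exact (hmax (σ', δ')).not_gt (sum_lt_sum (fun l _ => hTT' l) ⟨i, mem_univ i, hTT'_i⟩)

end ReturnTime

section WeightedContraction

variable {ι : Type*}

/-- For `φ ≤ K` this makes `O` a monotone `(K - 1) / K`-contraction in the `φ`-weighted sup-norm;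
the extra `-t` of `t • (φ - 1)` is what bounds the loss of a suboptimal action from below. -/
def IsWeightedContraction (φ : ι → ℝ) (O : (ι → ℝ) → ι → ℝ) : Prop :=
  ∀ x y (t : ℝ), 0 ≤ t → x ≤ y + t • φ → O x ≤ O y + t • (φ - 1)

theorem IsWeightedContraction.monotone {φ : ι → ℝ} {O : (ι → ℝ) → ι → ℝ}
    (hO : IsWeightedContraction φ O) : Monotone O := fun x y hxy => by
  simpa using hO x y 0 le_rfl (by simpa using hxy)

variable [Fintype ι]

noncomputable def weightedGap [Nonempty ι] (φ x y : ι → ℝ) : ℝ :=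
  univ.sup' univ_nonempty fun i => (x i - y i) / φ i

variable [Nonempty ι] {φ x y : ι → ℝ}

theorem weightedGap_le_iff (hφ : ∀ i, 0 < φ i) {t : ℝ} :
    weightedGap φ x y ≤ t ↔ x ≤ y + t • φ := by
  simp only [weightedGap, sup'_le_iff, mem_univ, true_implies, div_le_iff₀ (hφ _)]
  exact forall_congr' fun i => by simp [add_comm]

theorem le_add_weightedGap_smul (hφ : ∀ i, 0 < φ i) : x ≤ y + weightedGap φ x y • φ :=
  (weightedGap_le_iff hφ).mp le_rfl

theorem sub_le_weightedGap_mul (hφ : ∀ i, 0 < φ i) (i : ι) :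
    x i - y i ≤ weightedGap φ x y * φ i := by
  have := le_add_weightedGap_smul (x := x) (y := y) hφ i
  simp only [Pi.add_apply, Pi.smul_apply, smul_eq_mul] at this
  linarith

theorem exists_eq_add_weightedGap_mul (hφ : ∀ i, 0 < φ i) :
    ∃ i, x i = y i + weightedGap φ x y * φ i := by
  obtain ⟨i, -, hi⟩ := exists_mem_eq_sup' (univ_nonempty (α := ι)) fun i => (x i - y i) / φ i
  refine ⟨i, ?_⟩
  rw [weightedGap, hi, div_mul_cancel₀ _ (hφ i).ne']
  ring

theorem weightedGap_nonneg (hφ : ∀ i, 0 < φ i) (h : y ≤ x) : 0 ≤ weightedGap φ x y := by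
  obtain ⟨i, hi⟩ := exists_eq_add_weightedGap_mul (x := x) (y := y) hφ
  have := h i
  nlinarith [hφ i]

theorem le_of_weightedGap_nonpos (hφ : ∀ i, 0 < φ i) (h : weightedGap φ x y ≤ 0) : x ≤ y := by
  simpa using (weightedGap_le_iff hφ).mp h

namespace IsWeightedContraction

variable {O : (ι → ℝ) → ι → ℝ}

/-- At a state where the weighted gap `γ > 0` of `w` over `x` is attained, contraction would give
`γ ≤ γ - γ`. -/
theorem le_of_isFixedPt (hφ : ∀ i, 0 < φ i) (hO : IsWeightedContraction φ O) {w : ι → ℝ}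
    (hw : O w = w) (hx : O x ≤ x) : w ≤ x := by
  set γ := weightedGap φ w x
  refine le_of_weightedGap_nonpos hφ (not_lt.mp fun hγ => ?_)
  obtain ⟨i, hi⟩ := exists_eq_add_weightedGap_mul (x := w) (y := x) hφ
  have hcontr := hO w x γ hγ.le (le_add_weightedGap_smul hφ) i
  simp only [hw, Pi.add_apply, Pi.smul_apply, Pi.sub_apply, Pi.one_apply, smul_eq_mul] at hcontr
  linarith [hx i]

theorem weightedGap_le_mul (hφ : ∀ i, 0 < φ i) (hO : IsWeightedContraction φ O) {K : ℝ}
    (hK : 0 < K) (hφK : ∀ i, φ i ≤ K) {x' : ι → ℝ} (hy : O y = y) (hyx : y ≤ x)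
    (hx' : x' ≤ O x) : weightedGap φ x' y ≤ (K - 1) / K * weightedGap φ x y := by
  set γ := weightedGap φ x y
  have hγ : 0 ≤ γ := weightedGap_nonneg hφ hyx
  rw [weightedGap_le_iff hφ]
  intro i
  have hOx := hO x y γ hγ (le_add_weightedGap_smul hφ) i
  have hφi : γ * (φ i - 1) ≤ (K - 1) / K * γ * φ i := by
    rw [div_mul_eq_mul_div, div_mul_eq_mul_div, le_div_iff₀ hK]
    nlinarith [hφK i]
  simp only [hy, Pi.add_apply, Pi.smul_apply, Pi.sub_apply, Pi.one_apply, smul_eq_mul] at hOx ⊢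
  linarith [hx' i]

end IsWeightedContraction

end WeightedContraction

section PolicyIteration

variable {ι : Type*} {A : ι → Type*}

/-- A run of policy iteration for the one-step operators `G i · a`, with `H x i = min_a G i x a`:
`w k` is the fixed point of the policy operator of `σ k`, and `σ (k + 1)` is greedy for `w k`,
keeping the action of `σ k` wherever that one is already optimal. -/
structure IsContractingPolicyIteration (φ : ι → ℝ) (G : ∀ i, (ι → ℝ) → A i → ℝ)
    (H : (ι → ℝ) → ι → ℝ) (σ : ℕ → ∀ i, A i) (w : ℕ → ι → ℝ) : Prop where
  weight_pos : ∀ i, 0 < φ i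
  contracting : ∀ x y (t : ℝ), 0 ≤ t → x ≤ y + t • φ → ∀ i a, G i x a ≤ G i y a + t * (φ i - 1)
  le_apply : ∀ x i a, H x i ≤ G i x a
  exists_eq_apply : ∀ x i, ∃ a, H x i = G i x a
  apply_self : ∀ k i, G i (w k) (σ k i) = w k i
  eq_apply_succ : ∀ k i, H (w k) i = G i (w k) (σ (k + 1) i)
  succ_eq_of_eq_apply : ∀ k i, H (w k) i = G i (w k) (σ k i) → σ (k + 1) i = σ k i

namespace IsContractingPolicyIteration

variable {φ : ι → ℝ} {G : ∀ i, (ι → ℝ) → A i → ℝ} {H : (ι → ℝ) → ι → ℝ} {σ : ℕ → ∀ i, A i}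
  {w : ℕ → ι → ℝ}

theorem isWeightedContraction_policy (hP : IsContractingPolicyIteration φ G H σ w)
    (s : ∀ i, A i) : IsWeightedContraction φ fun x i => G i x (s i) :=
  fun x y t ht hxy i => hP.contracting x y t ht hxy i (s i)

theorem isWeightedContraction_min (hP : IsContractingPolicyIteration φ G H σ w) :
    IsWeightedContraction φ H := by
  intro x y t ht hxy i
  obtain ⟨a, ha⟩ := hP.exists_eq_apply y i
  calc H x i ≤ G i x a := hP.le_apply x i a
    _ ≤ G i y a + t * (φ i - 1) := hP.contracting x y t ht hxy i a
    _ = (H y + t • (φ - 1)) i := by simp [ha]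

theorem policy_apply_self (hP : IsContractingPolicyIteration φ G H σ w) (k : ℕ) :
    (fun i => G i (w k) (σ k i)) = w k :=
  funext (hP.apply_self k)

theorem min_le_self (hP : IsContractingPolicyIteration φ G H σ w) (k : ℕ) : H (w k) ≤ w k :=
  fun i => (hP.le_apply _ i _).trans_eq (hP.apply_self k i)

theorem policy_succ_eq_of_min_eq (hP : IsContractingPolicyIteration φ G H σ w) {k : ℕ}
    (h : H (w k) = w k) : σ (k + 1) = σ k :=
  funext fun i => hP.succ_eq_of_eq_apply k i (by rw [h, hP.apply_self])

theorem min_eq_of_policy_succ_eq (hP : IsContractingPolicyIteration φ G H σ w) {k : ℕ}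
    (h : σ (k + 1) = σ k) : H (w k) = w k :=
  funext fun i => by rw [hP.eq_apply_succ, h, hP.apply_self]

theorem min_eq_of_succ_eq (hP : IsContractingPolicyIteration φ G H σ w) {k : ℕ}
    (h : w (k + 1) = w k) : H (w k) = w k :=
  funext fun i => by rw [hP.eq_apply_succ, ← h, hP.apply_self]

variable [Fintype ι] [Nonempty ι]

theorem le_of_policy_eq (hP : IsContractingPolicyIteration φ G H σ w) {j k : ℕ}
    (h : σ j = σ k) : w j ≤ w k :=
  (hP.isWeightedContraction_policy (σ j)).le_of_isFixedPt hP.weight_pos (hP.policy_apply_self j)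
    (by rw [h, hP.policy_apply_self])

theorem succ_le (hP : IsContractingPolicyIteration φ G H σ w) (k : ℕ) : w (k + 1) ≤ w k :=
  (hP.isWeightedContraction_policy (σ (k + 1))).le_of_isFixedPt hP.weight_pos
    (hP.policy_apply_self (k + 1))
    fun i => (hP.eq_apply_succ k i).symm.trans_le (hP.min_le_self k i)

theorem antitone (hP : IsContractingPolicyIteration φ G H σ w) : Antitone w :=
  antitone_nat_of_succ_le hP.succ_le

/-- A repeated policy `σ j = σ k` with `j < k` forces
`w k ≤ w (j + 1) ≤ w j = w k`, and `w (j + 1) = w j` makes `w j` a fixed point of `H`. -/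
theorem exists_policy_succ_eq [∀ i, Finite (A i)] (hP : IsContractingPolicyIteration φ G H σ w) :
    ∃ k, σ (k + 1) = σ k := by
  have hrepeat : ∀ j k, j < k → σ j = σ k → σ (j + 1) = σ j := by
    intro j k hjk h
    have hw : w (j + 1) = w j := le_antisymm (hP.succ_le j)
      ((hP.le_of_policy_eq h).trans (hP.antitone (Nat.succ_le_of_lt hjk)))
    exact hP.policy_succ_eq_of_min_eq (hP.min_eq_of_succ_eq hw)
  obtain ⟨j, k, hne, h⟩ := Finite.exists_ne_map_eq_of_infinite σ
  rcases Nat.lt_or_gt_of_ne hne with hjk | hkj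
  exacts [⟨j, hrepeat j k hjk h⟩, ⟨k, hrepeat k j hkj h.symm⟩]

theorem succ_le_min (hP : IsContractingPolicyIteration φ G H σ w) (k : ℕ) :
    w (k + 1) ≤ H (w k) := by
  have := (hP.isWeightedContraction_policy (σ (k + 1))).monotone (hP.succ_le k)
  rwa [hP.policy_apply_self, show (fun i => G i (w k) (σ (k + 1) i)) = H (w k) from
    funext fun i => (hP.eq_apply_succ k i).symm] at this

section Stop

variable {k₀ : ℕ}

theorem le_of_policy_succ_eq (hP : IsContractingPolicyIteration φ G H σ w)
    (h0 : σ (k₀ + 1) = σ k₀) (k : ℕ) : w k₀ ≤ w k :=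
  hP.isWeightedContraction_min.le_of_isFixedPt hP.weight_pos (hP.min_eq_of_policy_succ_eq h0)
    (hP.min_le_self k)

theorem policy_eq_of_le (hP : IsContractingPolicyIteration φ G H σ w)
    (h0 : σ (k₀ + 1) = σ k₀) {k : ℕ} (hk : k₀ ≤ k) : σ k = σ k₀ := by
  induction k, hk using Nat.le_induction with
  | base => rfl
  | succ m _ ih =>
    have hw : w (m + 1) = w m := le_antisymm (hP.succ_le m)
      ((hP.le_of_policy_eq ih).trans (hP.le_of_policy_succ_eq h0 (m + 1)))
    rw [hP.policy_succ_eq_of_min_eq (hP.min_eq_of_succ_eq hw), ih]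

theorem weightedGap_pos (hP : IsContractingPolicyIteration φ G H σ w)
    (h0 : σ (k₀ + 1) = σ k₀) {k : ℕ} (hk : σ (k + 1) ≠ σ k) :
    0 < weightedGap φ (w k) (w k₀) := by
  refine lt_of_not_ge fun hle => hk (hP.policy_succ_eq_of_min_eq ?_)
  have hw : w k = w k₀ :=
    le_antisymm (le_of_weightedGap_nonpos hP.weight_pos hle) (hP.le_of_policy_succ_eq h0 k)
  rw [hw, hP.min_eq_of_policy_succ_eq h0]

theorem weightedGap_le_pow (hP : IsContractingPolicyIteration φ G H σ w)
    (h0 : σ (k₀ + 1) = σ k₀) {K : ℝ} (hK : 1 ≤ K) (hφK : ∀ i, φ i ≤ K) {k k' : ℕ} (hkk' : k ≤ k') :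
    weightedGap φ (w k') (w k₀) ≤ ((K - 1) / K) ^ (k' - k) * weightedGap φ (w k) (w k₀) := by
  induction k', hkk' using Nat.le_induction with
  | base => simp
  | succ m hm ih =>
    calc weightedGap φ (w (m + 1)) (w k₀) ≤ (K - 1) / K * weightedGap φ (w m) (w k₀) :=
          hP.isWeightedContraction_min.weightedGap_le_mul hP.weight_pos (by linarith) hφK
            (hP.min_eq_of_policy_succ_eq h0) (hP.le_of_policy_succ_eq h0 m) (hP.succ_le_min m)
      _ ≤ (K - 1) / K * (((K - 1) / K) ^ (m - k) * weightedGap φ (w k) (w k₀)) :=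
          mul_le_mul_of_nonneg_left ih (div_nonneg (by linarith) (by linarith))
      _ = ((K - 1) / K) ^ (m + 1 - k) * weightedGap φ (w k) (w k₀) := by
          rw [Nat.sub_add_comm hm, pow_succ]; ring

theorem weightedGap_le_apply_sub (hP : IsContractingPolicyIteration φ G H σ w)
    (h0 : σ (k₀ + 1) = σ k₀) {k : ℕ} {i : ι}
    (hi : w k i = w k₀ i + weightedGap φ (w k) (w k₀) * φ i) :
    weightedGap φ (w k) (w k₀) ≤ G i (w k₀) (σ k i) - w k₀ i := by
  have := hP.contracting (w k) (w k₀) _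
    (weightedGap_nonneg hP.weight_pos (hP.le_of_policy_succ_eq h0 k))
    (le_add_weightedGap_smul hP.weight_pos) i (σ k i)
  rw [hP.apply_self, hi] at this
  linarith

theorem apply_le (hP : IsContractingPolicyIteration φ G H σ w) (h0 : σ (k₀ + 1) = σ k₀)
    (k : ℕ) (i : ι) : G i (w k₀) (σ k i) ≤ w k i :=
  ((hP.isWeightedContraction_policy (σ k)).monotone (hP.le_of_policy_succ_eq h0 k) i).trans_eq
    (hP.apply_self k i)

/-- An action that realises the gap at step `k` can only be chosen again while the gap, which
decays like `((K - 1) / K) ^ (k' - k)`, is still at least `1 / K` of its value at step `k`. -/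
theorem one_le_mul_pow_of_policy_apply_eq (hP : IsContractingPolicyIteration φ G H σ w)
    (h0 : σ (k₀ + 1) = σ k₀) {K : ℝ} (hK : 1 ≤ K) (hφK : ∀ i, φ i ≤ K) {k k' : ℕ} {i : ι}
    (hk : σ (k + 1) ≠ σ k) (hi : w k i = w k₀ i + weightedGap φ (w k) (w k₀) * φ i)
    (hkk' : k ≤ k') (hσ : σ k' i = σ k i) : 1 ≤ K * ((K - 1) / K) ^ (k' - k) := by
  set β := weightedGap φ (w k) (w k₀)
  set β' := weightedGap φ (w k') (w k₀)
  have hβ : 0 < β := hP.weightedGap_pos h0 hk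
  have hβ' : 0 ≤ β' := weightedGap_nonneg hP.weight_pos (hP.le_of_policy_succ_eq h0 k')
  have hdecay : β' ≤ ((K - 1) / K) ^ (k' - k) * β := hP.weightedGap_le_pow h0 hK hφK hkk'
  have hβ_le : β ≤ β' * K :=
    calc β ≤ G i (w k₀) (σ k' i) - w k₀ i := hσ ▸ hP.weightedGap_le_apply_sub h0 hi
      _ ≤ w k' i - w k₀ i := by linarith [hP.apply_le h0 k' i]
      _ ≤ β' * φ i := sub_le_weightedGap_mul hP.weight_pos i
      _ ≤ β' * K := mul_le_mul_of_nonneg_left (hφK i) hβ'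
  nlinarith

end Stop

end IsContractingPolicyIteration

end PolicyIteration

theorem le_floor_log_div_log_of_one_le_mul_pow {K : ℝ} (hK : 1 < K) {m : ℕ}
    (h : 1 ≤ K * ((K - 1) / K) ^ m) : m ≤ ⌊Real.log K / Real.log (K / (K - 1))⌋₊ := by
  have hK1 : 0 < K - 1 := by linarith
  have hq : 1 < K / (K - 1) := (one_lt_div hK1).mpr (by linarith)
  have hpow : (K / (K - 1)) ^ m ≤ K := by
    rwa [← inv_div, inv_pow, ← div_eq_mul_inv, one_le_div (by positivity)] at h
  refine Nat.le_floor ((le_div_iff₀ (Real.log_pos hq)).mpr ?_)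
  rw [← Real.log_pow]
  exact Real.log_le_log (by positivity) hpow

/-- A sequence whose equal values occur less than `L` steps apart takes each value at most
`L` times, since `k ↦ k % L` is injective on each fibre. -/
theorem card_le_card_mul_of_sub_lt {α : Type*} {s : ℕ → α} {S : Finset α} {N L : ℕ}
    (hS : ∀ k < N, s k ∈ S) (hL : ∀ j k, j ≤ k → k < N → s j = s k → k - j < L) :
    N ≤ S.card * L := by
  have hinj : Set.InjOn (fun k => (s k, k % L)) (range N) := by
    intro j hj k hk hjk
    simp only [coe_range, Set.mem_Iio, Prod.mk.injEq] at hj hk hjk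
    wlog hle : j ≤ k generalizing j k
    · exact (this hk hj ⟨hjk.1.symm, hjk.2.symm⟩ (le_of_not_ge hle)).symm
    have hdvd : L ∣ k - j := (Nat.modEq_iff_dvd' hle).mp hjk.2
    have := Nat.eq_zero_of_dvd_of_lt hdvd (hL j k hle hk hjk.1)
    omega
  have hmaps : ∀ k ∈ range N, (s k, k % L) ∈ S ×ˢ range L := fun k hk => by
    have hL0 := hL k k le_rfl (mem_range.mp hk) rfl
    exact mem_product.mpr ⟨hS k (mem_range.mp hk), mem_range.mpr (Nat.mod_lt _ (by omega))⟩
  simpa using card_le_card_of_injOn _ hmaps hinj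

theorem card_sigma_erase {ι : Type*} [Fintype ι] {A : ι → Type*} [∀ i, Fintype (A i)]
    [∀ i, DecidableEq (A i)] (s : ∀ i, A i) :
    (univ.sigma fun i => univ.erase (s i)).card = ∑ i, Fintype.card (A i) - Fintype.card ι := by
  have hpos : ∀ i ∈ univ, 1 ≤ Fintype.card (A i) := fun i _ => Fintype.card_pos_iff.mpr ⟨s i⟩
  rw [card_sigma, ← card_univ, card_eq_sum_ones, ← sum_tsub_distrib _ hpos]
  simp [card_erase_of_mem]

theorem IsContractingPolicyIteration.exists_policy_succ_eq_le {ι : Type*} [Fintype ι]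
    [Nonempty ι] {A : ι → Type*} [∀ i, Fintype (A i)] {φ : ι → ℝ} {G : ∀ i, (ι → ℝ) → A i → ℝ}
    {H : (ι → ℝ) → ι → ℝ} {σ : ℕ → ∀ i, A i} {w : ℕ → ι → ℝ}
    (hP : IsContractingPolicyIteration φ G H σ w) {K : ℝ} (hK : 1 < K) (hφK : ∀ i, φ i ≤ K) :
    ∃ k ≤ (∑ i, Fintype.card (A i) - Fintype.card ι) *
        (1 + ⌊Real.log K / Real.log (K / (K - 1))⌋₊), σ (k + 1) = σ k := by
  classical
  have hstop := hP.exists_policy_succ_eq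
  set k₀ := Nat.find hstop
  have h0 : σ (k₀ + 1) = σ k₀ := Nat.find_spec hstop
  choose I hI using fun k => exists_eq_add_weightedGap_mul (x := w k) (y := w k₀) hP.weight_pos
  set L := 1 + ⌊Real.log K / Real.log (K / (K - 1))⌋₊
  have hwindow : ∀ j k, j ≤ k → j < k₀ → σ k (I j) = σ j (I j) → k - j < L :=
    fun j k hjk hj hσ => Nat.lt_one_add_iff.mpr <| le_floor_log_div_log_of_one_le_mul_pow hK <|
      hP.one_le_mul_pow_of_policy_apply_eq h0 hK.le hφK (Nat.find_min hstop hj) (hI j) hjk hσ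
  refine ⟨k₀, ?_, h0⟩
  rw [← card_sigma_erase (σ k₀)]
  refine card_le_card_mul_of_sub_lt (s := fun k => (⟨I k, σ k (I k)⟩ : Σ i, A i))
    (fun k hk => ?_) (fun j k hjk hk hjk' => ?_)
  · simp only [mem_sigma, mem_univ, mem_erase, ne_eq, and_true, true_and]
    intro hσ
    have := hwindow k (k₀ + L) (by omega) hk (by rw [hP.policy_eq_of_le h0 (by omega), hσ])
    omega
  · have hσ : ∀ i i', (⟨i, σ j i⟩ : Σ i, A i) = ⟨i', σ k i'⟩ → σ k i = σ j i := by
      intro i i' h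
      obtain ⟨rfl, h⟩ := Sigma.mk.inj_iff.mp h
      exact (eq_of_heq h).symm
    exact hwindow j k hjk (by omega) (hσ _ _ hjk')

section GainBias

variable {ι : Type*} (φ : ι → ℝ) (c : ι)

/-- Splits `x = gainOf φ c x • φ + biasOf φ c x` with `biasOf φ c x c = 0`; this inverts
`(η, v) ↦ η • φ + v` on pairs normalised by `v c = 0`. -/
noncomputable def gainOf (x : ι → ℝ) : ℝ := x c / φ c

noncomputable def biasOf (x : ι → ℝ) : ι → ℝ := x - gainOf φ c x • φ

variable {φ c}

theorem biasOf_apply_self (hφc : φ c ≠ 0) (x : ι → ℝ) : biasOf φ c x c = 0 := by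
  simp [biasOf, gainOf, div_mul_cancel₀ _ hφc]

theorem gainOf_smul_add (hφc : φ c ≠ 0) (η : ℝ) {v : ι → ℝ} (hv : v c = 0) :
    gainOf φ c (η • φ + v) = η := by
  simp [gainOf, hv, mul_div_assoc, div_self hφc]

theorem biasOf_smul_add (hφc : φ c ≠ 0) (η : ℝ) {v : ι → ℝ} (hv : v c = 0) :
    biasOf φ c (η • φ + v) = v := by
  simp [biasOf, gainOf_smul_add hφc η hv]

theorem le_add_mul_of_biasOf {g : (ι → ℝ) → ℝ} {d : ℝ} (hφc : 0 < φ c)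
    (hg : ∀ v v' (t : ℝ), v c = 0 → v' c = 0 → 0 ≤ t → v ≤ v' + t • φ → g v ≤ g v' + t * d)
    {x y : ι → ℝ} {t : ℝ} (hxy : x ≤ y + t • φ) :
    g (biasOf φ c x) + gainOf φ c x * d ≤ g (biasOf φ c y) + gainOf φ c y * d + t * d := by
  set s := gainOf φ c x - gainOf φ c y
  have hs : s ≤ t := by
    have := hxy c
    simp only [Pi.add_apply, Pi.smul_apply, smul_eq_mul] at this
    rw [sub_le_iff_le_add, gainOf, gainOf, div_le_iff₀ hφc, add_mul, div_mul_cancel₀ _ hφc.ne']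
    linarith
  have hbias : biasOf φ c x ≤ biasOf φ c y + (t - s) • φ := fun i => by
    have := hxy i
    simp only [biasOf, s, Pi.add_apply, Pi.sub_apply, Pi.smul_apply, smul_eq_mul] at this ⊢
    linarith
  have := hg _ _ (t - s) (biasOf_apply_self hφc.ne' x) (biasOf_apply_self hφc.ne' y)
    (sub_nonneg.mpr hs) hbias
  linarith [show (t - s) * d + gainOf φ c x * d = gainOf φ c y * d + t * d by ring]

end GainBias

theorem sum_mul_le_sum_mul_add {ι : Type*} [Fintype ι] [DecidableEq ι] {p v v' φ : ι → ℝ}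
    {c : ι} {t : ℝ} (hp : ∀ j, 0 ≤ p j) (hv : v c = 0) (hv' : v' c = 0) (hvv' : v ≤ v' + t • φ) :
    ∑ j, p j * v j ≤ ∑ j, p j * v' j + t * ∑ j ∈ univ.erase c, p j * φ j := by
  rw [← sub_le_iff_le_add', ← sum_sub_distrib,
    ← sum_erase (f := fun j => p j * v j - p j * v' j) univ (a := c) (by simp [hv, hv']), mul_sum]
  refine sum_le_sum fun j _ => ?_
  have := mul_le_mul_of_nonneg_left (hvv' j) (hp j)
  simp only [Pi.add_apply, Pi.smul_apply, smul_eq_mul] at this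
  linarith

theorem le_add_mul_of_le_add_smul {ι : Type*} [Fintype ι] [DecidableEq ι] {A B : ι → Type*}
    {P : ∀ i, A i → B i → ι → ℝ} {r : ∀ i, A i → B i → ℝ} {φ : ι → ℝ} {c : ι}
    {Fm : ∀ i, (ι → ℝ) → A i → ℝ} (hP0 : ∀ i a b j, 0 ≤ P i a b j)
    (hφ : ∀ i a b, ∑ j ∈ univ.erase c, P i a b j * φ j ≤ φ i - 1)
    (hFmax : ∀ i v a b, r i a b + ∑ j, P i a b j * v j ≤ Fm i v a)
    (hFatt : ∀ i v a, ∃ b : B i, Fm i v a = r i a b + ∑ j, P i a b j * v j)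
    {v v' : ι → ℝ} {t : ℝ} (hv : v c = 0) (hv' : v' c = 0) (ht : 0 ≤ t)
    (hvv' : v ≤ v' + t • φ) (i : ι) (a : A i) : Fm i v a ≤ Fm i v' a + t * (φ i - 1) := by
  obtain ⟨b, hb⟩ := hFatt i v a
  have hrow := sum_mul_le_sum_mul_add (hP0 i a b) hv hv' hvv'
  have := mul_le_mul_of_nonneg_left (hφ i a b) ht
  linarith [hFmax i v' a b]

theorem mean_payoff_policy_iteration_strongly_polynomial_general {n : ℕ}
    (A B : Fin n → Type*)
    [∀ i, Fintype (A i)] [∀ i, Nonempty (A i)]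
    [∀ i, Fintype (B i)] [∀ i, Nonempty (B i)]
    (P : ∀ i : Fin n, A i → B i → Fin n → ℝ)
    (r : ∀ i : Fin n, A i → B i → ℝ)
    (hP0 : ∀ i a b j, 0 ≤ P i a b j)
    (c : Fin n) (K : ℝ) (hK : 1 < K)
    (hfin : ∀ (σ : ∀ i, A i) (δ : ∀ i, B i) (i : Fin n),
        Summable fun k : ℕ =>
          ((colZero (Matrix.of fun i' j => P i' (σ i') (δ i') j) c) ^ k).mulVec
            (fun _ => 1) i)
    (hbound : ∀ (σ : ∀ i, A i) (δ : ∀ i, B i) (i : Fin n),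
        expReturnTime (Matrix.of fun i' j => P i' (σ i') (δ i') j) c i ≤ K)
    (Fm : ∀ i : Fin n, (Fin n → ℝ) → A i → ℝ)
    (hFmax : ∀ i v a b, r i a b + ∑ j, P i a b j * v j ≤ Fm i v a)
    (hFatt : ∀ i v a, ∃ b : B i, Fm i v a = r i a b + ∑ j, P i a b j * v j)
    (f : (Fin n → ℝ) → (Fin n → ℝ))
    (hle : ∀ v (i : Fin n) (a : A i), f v i ≤ Fm i v a)
    (hatt : ∀ v i, ∃ a : A i, f v i = Fm i v a)
    (σ : ℕ → ∀ i, A i) (η : ℕ → ℝ) (V : ℕ → Fin n → ℝ)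
    (hnorm : ∀ k, V k c = 0)
    (heig : ∀ k i, η k + V k i = Fm i (V k) (σ k i))
    (himp : ∀ k i, f (V k) i = Fm i (V k) (σ (k+1) i))
    (hcons : ∀ k i, f (V k) i = Fm i (V k) (σ k i) → σ (k+1) i = σ k i) :
    ∃ k ≤ ((∑ i, Fintype.card (A i)) - n) *
        (1 + Nat.floor (Real.log K / Real.log (K / (K - 1)))),
      σ (k+1) = σ k := by
  obtain ⟨σ₀, δ₀, hφ⟩ := exists_expReturnTime_superharmonic hP0 c hfin
  set φ := expReturnTime (policyMatrix P σ₀ δ₀) c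
  have hφpos : ∀ i, 0 < φ i := fun i => one_pos.trans_le <|
    one_le_expReturnTime (fun i j => hP0 i (σ₀ i) (δ₀ i) j) c (hfin σ₀ δ₀) i
  have hφc : φ c ≠ 0 := (hφpos c).ne'
  have : Nonempty (Fin n) := ⟨c⟩
  have hrun : IsContractingPolicyIteration φ
      (fun i x a => Fm i (biasOf φ c x) a + gainOf φ c x * (φ i - 1))
      (fun x i => f (biasOf φ c x) i + gainOf φ c x * (φ i - 1)) σ (fun k => η k • φ + V k) :=
    { weight_pos := hφpos
      contracting := fun _ _ _ _ hxy i a => le_add_mul_of_biasOf (hφpos c)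
        (fun _ _ _ hv hv' ht hvv' =>
          le_add_mul_of_le_add_smul hP0 hφ hFmax hFatt hv hv' ht hvv' i a) hxy
      le_apply := fun x i a => by simpa using hle _ i a
      exists_eq_apply := fun x i => (hatt _ i).imp fun a ha => by rw [ha]
      apply_self := fun k i => by
        simp [biasOf_smul_add hφc, gainOf_smul_add hφc, hnorm, ← heig]; ring
      eq_apply_succ := fun k i => by simp [biasOf_smul_add hφc, gainOf_smul_add hφc, hnorm, himp]
      succ_eq_of_eq_apply := fun k i h => hcons k i <| by
        simpa [biasOf_smul_add hφc, gainOf_smul_add hφc, hnorm] using h }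
  simpa using hrun.exists_policy_succ_eq_le hK (hbound σ₀ δ₀)

/-- Corollary `bound-for-games`: the Hoffman–Karp mean-payoff
policy iteration, for a two-player zero-sum stochastic game with transition
probabilities `P i a b ·`, rewards `r i a b`, a renewal state `c` whose
expected first return time is at most `K` under every pair of policies,
`f^(σ) v i = max_b (r i (σ i) b + Σ_j P i (σ i) b j v_j)` (captured by `Fm`)
and `f v i = min_a Fm i v a`, computing additive eigenpairs `(η^k, V^k)` with
`V^k c = 0` and improving policies conservatively, triggers its stopping
condition `σ_{k+1} = σ_k` after at most
`(m₁ - n)(1 + ⌊log K / log(K/(K-1))⌋)` iterations, with `m₁ = Σ_i |A i|`. -/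
theorem mean_payoff_policy_iteration_strongly_polynomial {n : ℕ}
    (A B : Fin n → Type*)
    [∀ i, Fintype (A i)] [∀ i, Nonempty (A i)]
    [∀ i, Fintype (B i)] [∀ i, Nonempty (B i)]
    (P : ∀ i : Fin n, A i → B i → Fin n → ℝ)
    (r : ∀ i : Fin n, A i → B i → ℝ)
    (hP0 : ∀ i a b j, 0 ≤ P i a b j)
    (hP1 : ∀ i a b, ∑ j, P i a b j = 1)
    (c : Fin n) (K : ℝ) (hK : 1 < K)
    (hfin : ∀ (σ : ∀ i, A i) (δ : ∀ i, B i) (i : Fin n),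
        Summable fun k : ℕ =>
          ((colZero (Matrix.of fun i' j => P i' (σ i') (δ i') j) c) ^ k).mulVec
            (fun _ => 1) i)
    (hbound : ∀ (σ : ∀ i, A i) (δ : ∀ i, B i) (i : Fin n),
        expReturnTime (Matrix.of fun i' j => P i' (σ i') (δ i') j) c i ≤ K)
    (Fm : ∀ i : Fin n, (Fin n → ℝ) → A i → ℝ)
    (hFmax : ∀ i v a b, r i a b + ∑ j, P i a b j * v j ≤ Fm i v a)
    (hFatt : ∀ i v a, ∃ b : B i, Fm i v a = r i a b + ∑ j, P i a b j * v j)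
    (f : (Fin n → ℝ) → (Fin n → ℝ))
    (hle : ∀ v (i : Fin n) (a : A i), f v i ≤ Fm i v a)
    (hatt : ∀ v i, ∃ a : A i, f v i = Fm i v a)
    (σ : ℕ → ∀ i, A i) (η : ℕ → ℝ) (V : ℕ → Fin n → ℝ)
    (hnorm : ∀ k, V k c = 0)
    (heig : ∀ k i, η k + V k i = Fm i (V k) (σ k i))
    (himp : ∀ k i, f (V k) i = Fm i (V k) (σ (k+1) i))
    (hcons : ∀ k i, f (V k) i = Fm i (V k) (σ k i) → σ (k+1) i = σ k i) :
    ∃ k ≤ ((∑ i, Fintype.card (A i)) - n) *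
        (1 + Nat.floor (Real.log K / Real.log (K / (K - 1)))),
      σ (k+1) = σ k :=
  mean_payoff_policy_iteration_strongly_polynomial_general A B P r hP0 c K hK hfin hbound Fm hFmax
    hFatt f hle hatt σ η V hnorm heig himp hcons
end
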